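/- Define the second-order Runge–Kutta scheme 𝓐(ρ) := ρ + Δt·𝓛(ρ) + (Δt²/2)·𝓛(𝓛(ρ)). Then the following are equivalent: (i) for every density matrix ρ_0, Tr(σ_X · 𝓐^{∘k}(ρ_0)) → 0 and Tr(σ_Y · 𝓐^{∘k}(ρ_0)) → 0 as k → ∞; (ii) |z²/2 − z + 1| < 1. -/

import Mathlib

/-!
The dephasing Lindbladian annihilates the diagonal of a qubit state and multiplies its
coherences `ρ₀₁`, `ρ₁₀` by `-λ` and `-conj λ`. Hence the RK2 step multiplies them by
`w = 1 - z + z² / 2` and its conjugate, and `𝓐^[k]` by `w ^ k` and `conj w ^ k`. The traces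
against `σ_X` and `σ_Y` are invertible linear combinations of the two coherences, so they decay
for every state iff `w ^ k ρ₀₁ → 0` for every state, and the state `|+⟩⟨+|` (with `ρ₀₁ = 1/2`)
shows this forces `‖w‖ < 1`.
-/

open Filter Topology
open scoped Matrix ComplexOrder

noncomputable def lindbladian {n : Type*} [Fintype n] (H L ρ : Matrix n n ℂ) : Matrix n n ℂ :=
  -Complex.I • (H * ρ - ρ * H) + L * ρ * Lᴴ - (1 / 2 : ℂ) • (Lᴴ * L * ρ + ρ * (Lᴴ * L))

noncomputable def rk2Step {E : Type*} [AddCommGroup E] [Module ℂ E] (𝓛 : E → E) (h : ℝ)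
    (ρ : E) : E :=
  ρ + (h : ℂ) • 𝓛 ρ + ((h : ℂ) ^ 2 / 2) • 𝓛 (𝓛 ρ)

def ScalesCoherences (w : ℂ) (T : Matrix (Fin 2) (Fin 2) ℂ → Matrix (Fin 2) (Fin 2) ℂ) : Prop :=
  ∀ M, T M 0 1 = w * M 0 1 ∧ T M 1 0 = star w * M 1 0

theorem lindbladian_smul_smul_of_involutive {n : Type*} [Fintype n] [DecidableEq n]
    {Z : Matrix n n ℂ} (hZ : Z.IsHermitian) (hZZ : Z * Z = 1) (β γ : ℝ) (ρ : Matrix n n ℂ) :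
    lindbladian ((β : ℂ) • Z) ((γ : ℂ) • Z) ρ =
      (-(β * Complex.I)) • (Z * ρ - ρ * Z) + ((γ : ℂ) ^ 2) • (Z * ρ * Z - ρ) := by
  simp only [lindbladian, Matrix.conjTranspose_smul, hZ.eq, Complex.star_def, Complex.conj_ofReal,
    Matrix.smul_mul, Matrix.mul_smul, smul_smul, hZZ, Matrix.one_mul, Matrix.mul_one]
  module

theorem scalesCoherences_lindbladian_pauliZ (β γ : ℝ) :
    ScalesCoherences (-(2 * (γ : ℂ) ^ 2 + 2 * β * Complex.I))
      (lindbladian ((β : ℂ) • !![1, 0; 0, -1]) ((γ : ℂ) • !![1, 0; 0, -1])) := by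
  have hZ : (!![1, 0; 0, -1] : Matrix (Fin 2) (Fin 2) ℂ).IsHermitian := by
    ext i j
    fin_cases i <;> fin_cases j <;> simp
  have hZZ : (!![1, 0; 0, -1] : Matrix (Fin 2) (Fin 2) ℂ) * !![1, 0; 0, -1] = 1 := by
    simp [Matrix.one_fin_two]
  intro M
  rw [lindbladian_smul_smul_of_involutive hZ hZZ, Matrix.eta_fin_two M]
  simp only [Matrix.mul_fin_two, Matrix.sub_apply, Matrix.add_apply, Matrix.smul_apply,
    Matrix.of_apply, Matrix.cons_val', Matrix.cons_val_zero, Matrix.cons_val_one,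
    Matrix.cons_val_fin_one, smul_eq_mul, Complex.star_def, map_neg, map_add, map_mul, map_pow,
    map_ofNat, Complex.conj_ofReal, Complex.conj_I]
  constructor <;> ring

namespace ScalesCoherences

variable {w : ℂ} {T : Matrix (Fin 2) (Fin 2) ℂ → Matrix (Fin 2) (Fin 2) ℂ}

theorem rk2Step (hT : ScalesCoherences w T) (h : ℝ) :
    ScalesCoherences (1 + h * w + (h * w) ^ 2 / 2) (rk2Step T h) := by
  intro M
  simp only [_root_.rk2Step, Matrix.add_apply, Matrix.smul_apply, smul_eq_mul, (hT _).1,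
    (hT _).2, star_add, star_mul', star_div₀, star_pow, Complex.star_def, Complex.conj_ofReal,
    map_one, map_ofNat]
  constructor <;> ring

theorem iterate (hT : ScalesCoherences w T) (k : ℕ) : ScalesCoherences (w ^ k) T^[k] := by
  induction k with
  | zero => intro M; simp
  | succ k ih =>
    intro M
    rw [Function.iterate_succ_apply', (hT _).1, (hT _).2, (ih M).1, (ih M).2, pow_succ',
      star_mul', star_pow]
    constructor <;> ring

end ScalesCoherences

theorem trace_pauliX_mul (M : Matrix (Fin 2) (Fin 2) ℂ) :
    (!![0, 1; 1, 0] * M).trace = M 1 0 + M 0 1 := by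
  rw [Matrix.eta_fin_two M]
  simp [Matrix.trace_fin_two]

theorem trace_pauliY_mul (M : Matrix (Fin 2) (Fin 2) ℂ) :
    (!![0, -Complex.I; Complex.I, 0] * M).trace = Complex.I * (M 0 1 - M 1 0) := by
  rw [Matrix.eta_fin_two M]
  simp only [Matrix.mul_fin_two, Matrix.trace_fin_two, Matrix.of_apply, Matrix.cons_val',
    Matrix.cons_val_zero, Matrix.cons_val_one, Matrix.cons_val_fin_one]
  ring

theorem tendsto_trace_pauliX_mul_and_pauliY_mul_iff {α : Type*} {l : Filter α}
    (M : α → Matrix (Fin 2) (Fin 2) ℂ) :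
    (Tendsto (fun k => (!![0, 1; 1, 0] * M k).trace) l (𝓝 0) ∧
        Tendsto (fun k => (!![0, -Complex.I; Complex.I, 0] * M k).trace) l (𝓝 0)) ↔
      Tendsto (fun k => M k 0 1) l (𝓝 0) ∧ Tendsto (fun k => M k 1 0) l (𝓝 0) := by
  simp only [trace_pauliX_mul, trace_pauliY_mul]
  constructor
  · rintro ⟨hX, hY⟩
    have h01 := (hX.sub (hY.const_mul Complex.I)).div_const 2
    have h10 := (hX.add (hY.const_mul Complex.I)).div_const 2
    simp only [mul_zero, sub_zero, add_zero, zero_div] at h01 h10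
    exact ⟨h01.congr fun k => by linear_combination (M k 1 0 - M k 0 1) / 2 * Complex.I_sq,
      h10.congr fun k => by linear_combination (M k 0 1 - M k 1 0) / 2 * Complex.I_sq⟩
  · rintro ⟨h01, h10⟩
    refine ⟨by simpa using h10.add h01, by simpa using (h01.sub h10).const_mul Complex.I⟩

theorem tendsto_pow_mul_nhds_zero_iff {𝕜 : Type*} [NormedField 𝕜] {w c : 𝕜} (hc : c ≠ 0) :
    Tendsto (fun k : ℕ => w ^ k * c) atTop (𝓝 0) ↔ ‖w‖ < 1 := by
  rw [← tendsto_pow_atTop_nhds_zero_iff_norm_lt_one]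
  refine ⟨fun h => ?_, fun h => by simpa using h.mul_const c⟩
  simpa [hc] using h.mul_const c⁻¹

theorem ScalesCoherences.tendsto_iterate_coherences_iff {w : ℂ}
    {T : Matrix (Fin 2) (Fin 2) ℂ → Matrix (Fin 2) (Fin 2) ℂ} (hT : ScalesCoherences w T) :
    (∀ ρ : Matrix (Fin 2) (Fin 2) ℂ, ρ.PosSemidef → ρ.trace = 1 →
        Tendsto (fun k => T^[k] ρ 0 1) atTop (𝓝 0) ∧ Tendsto (fun k => T^[k] ρ 1 0) atTop (𝓝 0))
      ↔ ‖w‖ < 1 := by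
  simp only [fun k ρ => ((hT.iterate k) ρ).1, fun k ρ => ((hT.iterate k) ρ).2, star_pow]
  constructor
  · intro h
    set ρPlus : Matrix (Fin 2) (Fin 2) ℂ := (1 / 2 : ℂ) • Matrix.vecMulVec 1 (star 1)
    have hρPlus : ρPlus.PosSemidef := (Matrix.posSemidef_vecMulVec_self_star _).smul (by positivity)
    have htr : ρPlus.trace = 1 := by
      simp only [ρPlus, Matrix.trace_fin_two]
      norm_num
    have hcoh : ρPlus 0 1 ≠ 0 := by simp [ρPlus]
    exact (tendsto_pow_mul_nhds_zero_iff hcoh).1 (h ρPlus hρPlus htr).1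
  · intro hw ρ _ _
    have hw' : ‖star w‖ < 1 := by rwa [norm_star]
    exact ⟨by simpa using (tendsto_pow_atTop_nhds_zero_of_norm_lt_one hw).mul_const (ρ 0 1),
      by simpa using (tendsto_pow_atTop_nhds_zero_of_norm_lt_one hw').mul_const (ρ 1 0)⟩

theorem abs_stability_RK2_general
    (a b Δt : ℝ) (ha : 0 < a) (z : ℂ)
    (hz : z = ((a : ℂ) + (b : ℂ) * Complex.I) * (Δt : ℂ))
    (σX σY σZ H L : Matrix (Fin 2) (Fin 2) ℂ)
    (hσX : σX = !![0, 1; 1, 0])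
    (hσY : σY = !![0, -Complex.I; Complex.I, 0])
    (hσZ : σZ = !![1, 0; 0, -1])
    (hH : H = ((b / 2 : ℝ) : ℂ) • σZ)
    (hL : L = (Real.sqrt (a / 2) : ℂ) • σZ)
    (𝓛 : Matrix (Fin 2) (Fin 2) ℂ → Matrix (Fin 2) (Fin 2) ℂ)
    (h𝓛 : 𝓛 = fun ρ => -Complex.I • (H * ρ - ρ * H) + L * ρ * Lᴴ
        - (1 / 2 : ℂ) • (Lᴴ * L * ρ + ρ * (Lᴴ * L)))
    (𝓐 : Matrix (Fin 2) (Fin 2) ℂ → Matrix (Fin 2) (Fin 2) ℂ)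
    (h𝓐 : 𝓐 = fun ρ => ρ + (Δt : ℂ) • 𝓛 ρ + ((Δt : ℂ) ^ 2 / 2) • 𝓛 (𝓛 ρ)) :
    (∀ ρ0 : Matrix (Fin 2) (Fin 2) ℂ, ρ0.PosSemidef → ρ0.trace = 1 →
        Tendsto (fun k => (σX * 𝓐^[k] ρ0).trace) atTop (nhds 0) ∧
        Tendsto (fun k => (σY * 𝓐^[k] ρ0).trace) atTop (nhds 0))
      ↔ ‖z ^ 2 / 2 - z + 1‖ < 1 := by
  have hrate : -(2 * (Real.sqrt (a / 2) : ℂ) ^ 2 + 2 * ((b / 2 : ℝ) : ℂ) * Complex.I) =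
      -((a : ℂ) + b * Complex.I) := by
    rw [← Complex.ofReal_pow, Real.sq_sqrt (by positivity)]
    push_cast
    ring
  have hT : ScalesCoherences (z ^ 2 / 2 - z + 1) 𝓐 := by
    have h := (scalesCoherences_lindbladian_pauliZ (b / 2) (Real.sqrt (a / 2))).rk2Step Δt
    rw [hrate] at h
    convert h using 1
    · rw [hz]
      ring
    · subst hσZ hH hL h𝓛 h𝓐
      rfl
  subst hσX hσY
  simp only [tendsto_trace_pauliX_mul_and_pauliY_mul_iff]
  exact hT.tendsto_iterate_coherences_iff

/-- Absolute stability of the second-order Runge–Kutta scheme (Theorem 9 of the paper):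
the off-diagonal observables decay for every density matrix iff `|z²/2 - z + 1| < 1`. -/
theorem abs_stability_RK2
    (a b Δt : ℝ) (ha : 0 < a) (hΔt : 0 < Δt) (z : ℂ)
    (hz : z = ((a : ℂ) + (b : ℂ) * Complex.I) * (Δt : ℂ))
    (σX σY σZ H L : Matrix (Fin 2) (Fin 2) ℂ)
    (hσX : σX = !![0, 1; 1, 0])
    (hσY : σY = !![0, -Complex.I; Complex.I, 0])
    (hσZ : σZ = !![1, 0; 0, -1])
    (hH : H = ((b / 2 : ℝ) : ℂ) • σZ)
    (hL : L = (Real.sqrt (a / 2) : ℂ) • σZ)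
    (𝓛 : Matrix (Fin 2) (Fin 2) ℂ → Matrix (Fin 2) (Fin 2) ℂ)
    (h𝓛 : 𝓛 = fun ρ => -Complex.I • (H * ρ - ρ * H) + L * ρ * Lᴴ
        - (1 / 2 : ℂ) • (Lᴴ * L * ρ + ρ * (Lᴴ * L)))
    (𝓐 : Matrix (Fin 2) (Fin 2) ℂ → Matrix (Fin 2) (Fin 2) ℂ)
    (h𝓐 : 𝓐 = fun ρ => ρ + (Δt : ℂ) • 𝓛 ρ + ((Δt : ℂ) ^ 2 / 2) • 𝓛 (𝓛 ρ)) :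
    (∀ ρ0 : Matrix (Fin 2) (Fin 2) ℂ, ρ0.PosSemidef → ρ0.trace = 1 →
        Tendsto (fun k => (σX * 𝓐^[k] ρ0).trace) atTop (nhds 0) ∧
        Tendsto (fun k => (σY * 𝓐^[k] ρ0).trace) atTop (nhds 0))
      ↔ ‖z ^ 2 / 2 - z + 1‖ < 1 :=
  abs_stability_RK2_general a b Δt ha z hz σX σY σZ H L hσX hσY hσZ hH hL 𝓛 h𝓛 𝓐 h𝓐
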